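/- arXiv:math/0312295 — 4 statements merged into one kernel-verified Lean document; each statement's English description precedes it below -/
import Mathlib

section
/- Let A be a square integer matrix of size r, and let τ = [[0, I_s],[−I_s, 0]] be the standard symplectic 2s×2s matrix. Then the Kronecker product A ⊗ τ is integrally congruent (after simultaneous row/column permutation) to [[0, ⊞ˢA],[−⊞ˢA, 0]] and hence is null-cobordant. -/
open Matrix

/-- A square integer matrix is *null-cobordant* (Levine) if, after identifying
its index type with `Fin r ⊕ Fin r`, it is integrally congruent (`N ↦ P * N * Pᵀ`
with `P` invertible over `ℤ`) to a matrix whose upper-left `r × r` block is zero. -/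
def NullCobordant {n : Type*} [Fintype n] [DecidableEq n] (N : Matrix n n ℤ) : Prop :=
  ∃ (r : ℕ) (e : n ≃ Fin r ⊕ Fin r) (P : Matrix n n ℤ), IsUnit P.det ∧
    ∀ i j : Fin r, (P * N * Pᵀ) (e.symm (Sum.inl i)) (e.symm (Sum.inl j)) = 0
open scoped Kronecker

namespace Matrix

theorem reindex_kroneckerMap_fromBlocks {α β γ l n m₁ m₂ n₁ n₂ : Type*} (f : α → β → γ)
    (A : Matrix l n α) (B₁₁ : Matrix m₁ n₁ β) (B₁₂ : Matrix m₁ n₂ β) (B₂₁ : Matrix m₂ n₁ β)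
    (B₂₂ : Matrix m₂ n₂ β) :
    reindex (Equiv.prodSumDistrib l m₁ m₂) (Equiv.prodSumDistrib n n₁ n₂)
        (kroneckerMap f A (fromBlocks B₁₁ B₁₂ B₂₁ B₂₂)) =
      fromBlocks (kroneckerMap f A B₁₁) (kroneckerMap f A B₁₂) (kroneckerMap f A B₂₁)
        (kroneckerMap f A B₂₂) := by
  ext (⟨i, k⟩ | ⟨i, k⟩) (⟨j, k'⟩ | ⟨j, k'⟩) <;> rfl

theorem kronecker_neg {α l m n p : Type*} [Mul α] [HasDistribNeg α] (A : Matrix l m α)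
    (B : Matrix n p α) : A ⊗ₖ (-B) = -(A ⊗ₖ B) := by
  ext; simp

end Matrix

theorem NullCobordant.of_reindex_eq_fromBlocks {n m : Type*} [Fintype n] [DecidableEq n]
    [Fintype m] {N : Matrix n n ℤ} (e : n ≃ m ⊕ m) {B C D : Matrix m m ℤ}
    (h : reindex e e N = fromBlocks 0 B C D) : NullCobordant N := by
  refine ⟨Fintype.card m, e.trans (Equiv.sumCongr (Fintype.equivFin m) (Fintype.equivFin m)),
    1, by simp, fun i j => ?_⟩
  simpa using congrFun (congrFun h (Sum.inl ((Fintype.equivFin m).symm i)))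
    (Sum.inl ((Fintype.equivFin m).symm j))

theorem stmt4 (r s : ℕ) (A : Matrix (Fin r) (Fin r) ℤ)
    (τ : Matrix (Fin s ⊕ Fin s) (Fin s ⊕ Fin s) ℤ)
    (hτ : τ = Matrix.fromBlocks 0 1 (-1) 0)
    (D : Matrix (Fin r × Fin s) (Fin r × Fin s) ℤ)
    (hD : D = Matrix.blockDiagonal (fun _ : Fin s => A)) :
    Matrix.reindex (Equiv.prodSumDistrib (Fin r) (Fin s) (Fin s))
        (Equiv.prodSumDistrib (Fin r) (Fin s) (Fin s)) (A ⊗ₖ τ) =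
      Matrix.fromBlocks 0 D (-D) 0 ∧
    NullCobordant (A ⊗ₖ τ) := by
  have hblocks : reindex (Equiv.prodSumDistrib (Fin r) (Fin s) (Fin s))
      (Equiv.prodSumDistrib (Fin r) (Fin s) (Fin s)) (A ⊗ₖ τ) = fromBlocks 0 D (-D) 0 := by
    rw [hτ, reindex_kroneckerMap_fromBlocks, hD, kronecker_zero, kronecker_neg, kronecker_one]
  exact ⟨hblocks, .of_reindex_eq_fromBlocks _ hblocks⟩
end

section
/- Let A^σ be a square integer matrix in block anti-diagonal form with blocks L₁, …, L_{k−2} along the anti-diagonal (L_i pairing block i against block k−1−i, each L_i square, with L_i and L_{k−1−i} of the same size), where k is odd. Then conjugating A^σ by the permutation matrix J = [[0, I_ν, 0],[I_μ, 0, 0],[0, 0, I_μ]] (where ν is the size of the middle block L_{(k−1)/2} and μ the total size of the blocks above the middle) yields the block-diagonal sum of L_{(k−1)/2} with the matrix [[0, C],[B, 0]], where B collects the blocks L_{(k+1)/2},…,L_{k−2} and C collects L₁,…,L_{(k−3)/2}. Consequently A^σ is cobordant to L_{(k−1)/2}. -/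
/-!
Listing the blocks as the middle one, the blocks above it, and then their mirror images turns
the anti-diagonal matrix into `L_mid ⊞ [[0, C], [B, 0]]`. In
`(L_mid ⊞ [[0, C], [B, 0]]) ⊞ (-L_mid)` take the `L_mid`-coordinates and the rows of `C` as the
first half of the index set; adding the `-L_mid`-coordinates to the `L_mid`-coordinates is a
unimodular congruence after which that half spans a zero block.
-/

open Matrix

/-- Two square integer matrices are cobordant if `A ⊞ (-B)` is null-cobordant. -/
def Cobordant {m n : Type*} [Fintype m] [DecidableEq m] [Fintype n] [DecidableEq n]
    (A : Matrix m m ℤ) (B : Matrix n n ℤ) : Prop :=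
  NullCobordant (Matrix.fromBlocks A 0 0 (-B))

/-- The block anti-diagonal matrix with blocks `L i` in row-block `i`,
column-block `rev i` (sizes `d i`, where `d i = d (rev i)`). -/
def antiDiagBlocks {n : ℕ} (d : Fin n → ℕ) (hd : ∀ i, d i = d i.rev)
    (L : ∀ i, Matrix (Fin (d i)) (Fin (d i)) ℤ) :
    Matrix ((i : Fin n) × Fin (d i)) ((i : Fin n) × Fin (d i)) ℤ :=
  fun p q =>
    if h : q.1 = p.1.rev then L p.1 p.2 (Fin.cast (by rw [h, ← hd p.1]) q.2) else 0

section Cobordism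

variable {n n' : Type*} [Fintype n] [DecidableEq n] [Fintype n'] [DecidableEq n']

theorem NullCobordant.of_reindex (e : n ≃ n') {N : Matrix n n ℤ}
    (h : NullCobordant (reindex e e N)) : NullCobordant N := by
  obtain ⟨r, f, P, hP, hzero⟩ := h
  refine ⟨r, e.trans f, reindex e.symm e.symm P, by rwa [det_reindex_self],
    fun i j => ?_⟩
  have hcongr : reindex e.symm e.symm P * N * (reindex e.symm e.symm P)ᵀ =
      reindex e.symm e.symm (P * reindex e e N * Pᵀ) := by
    rw [reindex_apply, reindex_apply, reindex_apply, ← submatrix_mul_equiv _ _ _ e,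
      ← submatrix_mul_equiv _ _ _ e]
    simp only [Equiv.symm_symm, transpose_submatrix, submatrix_submatrix, Equiv.symm_comp_self,
      submatrix_id_id]
  rw [hcongr]
  simpa only [reindex_apply, submatrix_apply, Equiv.symm_symm, Equiv.symm_trans_apply,
    Equiv.apply_symm_apply] using hzero i j

theorem nullCobordant_of_toBlocks₁₁_eq_zero {α : Type*} [Fintype α] [DecidableEq α]
    {N : Matrix (α ⊕ α) (α ⊕ α) ℤ} (P : Matrix (α ⊕ α) (α ⊕ α) ℤ) (hP : IsUnit P.det)
    (h : (P * N * Pᵀ).toBlocks₁₁ = 0) : NullCobordant N :=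
  let g := Fintype.equivFin α
  ⟨_, g.sumCongr g, P, hP, fun i j => congrFun₂ h (g.symm i) (g.symm j)⟩

theorem Cobordant.of_reindex_left {m : Type*} [Fintype m] [DecidableEq m] (e : n ≃ n')
    {A : Matrix n n ℤ} {B : Matrix m m ℤ} (h : Cobordant (reindex e e A) B) : Cobordant A B :=
  NullCobordant.of_reindex (e.sumCongr (.refl m)) <| by
    have hblocks : reindex (e.sumCongr (.refl m)) (e.sumCongr (.refl m)) (fromBlocks A 0 0 (-B)) =
        fromBlocks (reindex e e A) 0 0 (-B) := by
      ext (i | i) (j | j) <;> rfl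
    rw [hblocks]
    exact h

def sumShuffle (p β : Type*) : (p ⊕ (β ⊕ β)) ⊕ p ≃ (p ⊕ β) ⊕ (p ⊕ β) :=
  ((Equiv.sumAssoc p β β).symm.sumCongr (.refl p)).trans
    ((Equiv.sumAssoc _ _ _).trans ((Equiv.refl _).sumCongr (Equiv.sumComm β p)))

theorem cobordant_fromBlocks_antiDiag {p β : Type*} [Fintype p] [DecidableEq p] [Fintype β]
    [DecidableEq β] (A : Matrix p p ℤ) (B C : Matrix β β ℤ) :
    Cobordant (fromBlocks A 0 0 (fromBlocks 0 C B 0)) A := by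
  have hshuffle : reindex (sumShuffle p β) (sumShuffle p β)
      (fromBlocks (fromBlocks A 0 0 (fromBlocks 0 C B 0)) 0 0 (-A)) =
      fromBlocks (fromBlocks A 0 0 0) (fromBlocks 0 0 0 C) (fromBlocks 0 0 0 B)
        (fromBlocks (-A) 0 0 0) := by
    ext ((x | b) | (x | b)) ((y | c) | (y | c)) <;> rfl
  -- `P = [[1, Q], [0, 1]]` with `Q` the identity on the `A`-coordinates: the upper-left block
  -- of `P N Pᵀ` becomes `A ⊞ 0 + Q ((-A) ⊞ 0) Qᵀ = 0`.
  refine NullCobordant.of_reindex (sumShuffle p β)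
    (nullCobordant_of_toBlocks₁₁_eq_zero (fromBlocks 1 (fromBlocks 1 0 0 0) 0 1) ?_ ?_)
  · simp
  · rw [hshuffle]
    simp [fromBlocks_multiply, fromBlocks_transpose, fromBlocks_add]

end Cobordism

section AntiDiagBlocks

variable {n : ℕ} (d : Fin n → ℕ) (hd : ∀ i, d i = d i.rev)
  (L : ∀ i, Matrix (Fin (d i)) (Fin (d i)) ℤ)

theorem antiDiagBlocks_apply_eq_zero {p q : (i : Fin n) × Fin (d i)} (h : q.1 ≠ p.1.rev) :
    antiDiagBlocks d hd L p q = 0 :=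
  dif_neg h

theorem antiDiagBlocks_apply_of_rev_eq_self {i : Fin n} (hi : i.rev = i) (x y : Fin (d i)) :
    antiDiagBlocks d hd L ⟨i, x⟩ ⟨i, y⟩ = L i x y :=
  dif_pos hi.symm

variable {κ : Type} (σ : Unit ⊕ (κ ⊕ κ) ≃ Fin n)

def antiDiagIndexEquiv (hσ : ∀ k, (σ k).rev = σ (k.map id Sum.swap)) :
    ((i : Fin n) × Fin (d i)) ≃
      Fin (d (σ (.inl ()))) ⊕ ((Σ j : κ, Fin (d (σ (.inr (.inl j))))) ⊕
        (Σ j : κ, Fin (d (σ (.inr (.inl j)))))) :=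
  (Equiv.sigmaCongrLeft σ).symm.trans <| (Equiv.sumSigmaDistrib _).trans <|
    (Equiv.uniqueSigma _).sumCongr <| (Equiv.sumSigmaDistrib _).trans <|
      (Equiv.refl _).sumCongr <|
        Equiv.sigmaCongrRight fun j =>
          finCongr ((hd _).trans (congrArg d (hσ (.inr (.inl j))))).symm

theorem exists_reindex_antiDiagBlocks_eq_fromBlocks
    (hσ : ∀ k, (σ k).rev = σ (k.map id Sum.swap)) :
    ∃ B C, reindex (antiDiagIndexEquiv d hd σ hσ) (antiDiagIndexEquiv d hd σ hσ)
      (antiDiagBlocks d hd L) = fromBlocks (L (σ (.inl ()))) 0 0 (fromBlocks 0 C B 0) := by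
  set M := reindex (antiDiagIndexEquiv d hd σ hσ) (antiDiagIndexEquiv d hd σ hσ)
    (antiDiagBlocks d hd L)
  have hzero (k k' : Unit ⊕ (κ ⊕ κ)) (hk : k' ≠ k.map id Sum.swap) x y :
      antiDiagBlocks d hd L ⟨σ k, x⟩ ⟨σ k', y⟩ = 0 :=
    antiDiagBlocks_apply_eq_zero d hd L (by rw [hσ]; exact σ.injective.ne hk)
  refine ⟨M.toBlocks₂₂.toBlocks₂₁, M.toBlocks₂₂.toBlocks₁₂, ?_⟩
  rw [← fromBlocks_toBlocks M, ← fromBlocks_toBlocks M.toBlocks₂₂]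
  congr 1
  · ext x y
    exact antiDiagBlocks_apply_of_rev_eq_self d hd L (hσ _) x y
  · ext x (⟨j, y⟩ | ⟨j, y⟩)
    · exact hzero (.inl ()) (.inr (.inl j)) (by simp) _ _
    · exact hzero (.inl ()) (.inr (.inr j)) (by simp) _ _
  · ext (⟨j, x⟩ | ⟨j, x⟩) y
    · exact hzero (.inr (.inl j)) (.inl ()) (by simp) _ _
    · exact hzero (.inr (.inr j)) (.inl ()) (by simp) _ _
  · congr 1
    · ext ⟨j, x⟩ ⟨k, y⟩
      exact hzero (.inr (.inl j)) (.inr (.inl k)) (by simp) _ _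
    · ext ⟨j, x⟩ ⟨k, y⟩
      exact hzero (.inr (.inr j)) (.inr (.inr k)) (by simp) _ _

end AntiDiagBlocks

def finOddSplit (t : ℕ) : Unit ⊕ (Fin t ⊕ Fin t) → Fin (2 * t + 1)
  | .inl _ => ⟨t, by omega⟩
  | .inr (.inl j) => Fin.castLE (by omega) j
  | .inr (.inr j) => (Fin.castLE (by omega) j).rev

theorem finOddSplit_injective (t : ℕ) : Function.Injective (finOddSplit t) := by
  rintro (_ | i | i) (_ | j | j) h <;>
    simp [finOddSplit, Fin.ext_iff, Fin.val_rev] at h ⊢ <;> omega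

noncomputable def finOddEquiv (t : ℕ) : Unit ⊕ (Fin t ⊕ Fin t) ≃ Fin (2 * t + 1) :=
  .ofBijective (finOddSplit t) <| (Fintype.bijective_iff_injective_and_card _).2
    ⟨finOddSplit_injective t, by simp; ring⟩

theorem finOddEquiv_rev (t : ℕ) (k : Unit ⊕ (Fin t ⊕ Fin t)) :
    (finOddEquiv t k).rev = finOddEquiv t (k.map id Sum.swap) := by
  rcases k with _ | j | j <;> simp [finOddEquiv, finOddSplit, Fin.ext_iff, Fin.val_rev]; omega

/-- For an odd number `2t+1` of anti-diagonal blocks, the matrix decomposes, after a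
permutation of indices, as the block sum of the middle block with a matrix of the
form `[[0, C],[B, 0]]`; consequently it is cobordant to its middle block. -/
theorem stmt9 (t : ℕ) (d : Fin (2 * t + 1) → ℕ) (hd : ∀ i, d i = d i.rev)
    (L : ∀ i, Matrix (Fin (d i)) (Fin (d i)) ℤ)
    (mid : Fin (2 * t + 1)) (hmid : (mid : ℕ) = t) :
    (∃ (β : Type) (_ : Fintype β) (_ : DecidableEq β)
        (e : ((i : Fin (2 * t + 1)) × Fin (d i)) ≃ (Fin (d mid) ⊕ (β ⊕ β)))
        (B C : Matrix β β ℤ),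
      Matrix.reindex e e (antiDiagBlocks d hd L) =
        Matrix.fromBlocks (L mid) 0 0 (Matrix.fromBlocks 0 C B 0)) ∧
    Cobordant (antiDiagBlocks d hd L) (L mid) := by
  obtain rfl : mid = finOddEquiv t (.inl ()) := Fin.ext hmid
  obtain ⟨B, C, hblocks⟩ :=
    exists_reindex_antiDiagBlocks_eq_fromBlocks d hd L _ (finOddEquiv_rev t)
  refine ⟨⟨_, inferInstance, inferInstance, _, B, C, hblocks⟩, ?_⟩
  exact Cobordant.of_reindex_left _ (hblocks ▸ cobordant_fromBlocks_antiDiag _ B C)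
end

section
/- Cobordism of integer matrices (within the set of matrices N such that N + εNᵀ is unimodular, for fixed ε = ±1) is symmetric: if A ⊞ (−B) is null-cobordant then B ⊞ (−A) is null-cobordant. -/
open Matrix

namespace NullCobordant

variable {m n : Type*} [Fintype m] [DecidableEq m] [Fintype n] [DecidableEq n]

theorem neg {N : Matrix n n ℤ} (h : NullCobordant N) : NullCobordant (-N) := by
  obtain ⟨r, e, P, hP, hzero⟩ := h
  refine ⟨r, e, P, hP, fun i j => ?_⟩
  simp only [Matrix.mul_neg, Matrix.neg_mul, Matrix.neg_apply, hzero i j, neg_zero]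

theorem submatrix_equiv {N : Matrix n n ℤ} (f : m ≃ n) (h : NullCobordant N) :
    NullCobordant (N.submatrix f f) := by
  obtain ⟨r, e, P, hP, hzero⟩ := h
  refine ⟨r, f.trans e, P.submatrix f f, by rwa [det_submatrix_equiv_self], fun i j => ?_⟩
  rw [transpose_submatrix, submatrix_mul_equiv, submatrix_mul_equiv]
  simpa using hzero i j

end NullCobordant

theorem Matrix.neg_fromBlocks_neg_submatrix_swap {α β R : Type*} [AddGroup R]
    (A : Matrix α α R) (B : Matrix β β R) :
    -(fromBlocks A 0 0 (-B)).submatrix Sum.swap Sum.swap = fromBlocks B 0 0 (-A) := by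
  rw [fromBlocks_submatrix_sum_swap_sum_swap, fromBlocks_neg]
  simp

theorem stmt16_general {a b : ℕ}
    (A : Matrix (Fin a) (Fin a) ℤ) (B : Matrix (Fin b) (Fin b) ℤ)
    (h : NullCobordant (Matrix.fromBlocks A 0 0 (-B))) :
    NullCobordant (Matrix.fromBlocks B 0 0 (-A)) := by
  rw [← neg_fromBlocks_neg_submatrix_swap]
  exact (h.submatrix_equiv (Equiv.sumComm (Fin b) (Fin a))).neg

theorem stmt16 {a b : ℕ} (ε : ℤ) (hε : ε = 1 ∨ ε = -1)
    (A : Matrix (Fin a) (Fin a) ℤ) (B : Matrix (Fin b) (Fin b) ℤ)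
    (hA : IsUnit (A + ε • Aᵀ).det) (hB : IsUnit (B + ε • Bᵀ).det)
    (h : NullCobordant (Matrix.fromBlocks A 0 0 (-B))) :
    NullCobordant (Matrix.fromBlocks B 0 0 (-A)) :=
  stmt16_general A B h
end

section
/- If A is cobordant to B and B is null-cobordant (all within the set of matrices N with N + εNᵀ unimodular), then A is null-cobordant. -/
open Matrix

namespace LevineAux
set_option linter.unusedSectionVars false
open Matrix Module Submodule LinearMap


variable {K : Type*} [Field K] {V : Type*} [AddCommGroup V] [Module K V] [FiniteDimensional K V]

lemma orth_sup (B : LinearMap.BilinForm K V) (P Q : Submodule K V) :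
    B.orthogonal (P ⊔ Q) = B.orthogonal P ⊓ B.orthogonal Q := by
  ext m
  simp only [LinearMap.BilinForm.mem_orthogonal_iff, Submodule.mem_inf]
  constructor
  · intro h
    exact ⟨fun n hn => h n (le_sup_left (a := P) (b := Q) hn),
           fun n hn => h n (le_sup_right (a := P) (b := Q) hn)⟩
  · rintro ⟨h1, h2⟩ n hn
    rcases Submodule.mem_sup.1 hn with ⟨p, hp, q, hq, rfl⟩
    have : B (p + q) m = B p m + B q m := by simp
    simpa [LinearMap.BilinForm.IsOrtho, this, h1 p hp, h2 q hq] using this.trans (by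
      rw [h1 p hp, h2 q hq, add_zero])

lemma orth_inf (B : LinearMap.BilinForm K V) (hB : B.Nondegenerate) (hB0 : B.IsRefl)
    (P Q : Submodule K V) :
    B.orthogonal (P ⊓ Q) = B.orthogonal P ⊔ B.orthogonal Q := by
  conv_lhs => rw [← LinearMap.BilinForm.orthogonal_orthogonal hB hB0 P,
    ← LinearMap.BilinForm.orthogonal_orthogonal hB hB0 Q]
  rw [← orth_sup, LinearMap.BilinForm.orthogonal_orthogonal hB hB0]

/-- isotropic + half dimension implies Lagrangian -/
lemma lagrangian_of_isotropic (B : LinearMap.BilinForm K V) (hB : B.Nondegenerate)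
    (hB0 : B.IsRefl) (W : Submodule K V) (hiso : ∀ x ∈ W, ∀ y ∈ W, B x y = 0)
    (hdim : 2 * finrank K W = finrank K V) : B.orthogonal W = W := by
  have hle : W ≤ B.orthogonal W := fun x hx => fun n hn => hiso n hn x hx
  have hfr : finrank K (B.orthogonal W) ≤ finrank K W := by
    rw [LinearMap.BilinForm.finrank_orthogonal hB]
    omega
  exact (Submodule.eq_of_le_of_finrank_le hle hfr).symm

lemma span_isotropic (B : LinearMap.BilinForm K V) (s : Set V)
    (h : ∀ x ∈ s, ∀ y ∈ s, B x y = 0) :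
    ∀ x ∈ Submodule.span K s, ∀ y ∈ Submodule.span K s, B x y = 0 := by
  have step1 : ∀ x ∈ s, ∀ y ∈ Submodule.span K s, B x y = 0 := by
    intro x hx
    have : Submodule.span K s ≤ LinearMap.ker (B x) := by
      rw [Submodule.span_le]; intro y hy; exact h x hx y hy
    intro y hy; exact this hy
  intro x hx y hy
  have : Submodule.span K s ≤ LinearMap.ker (B.flip y) := by
    rw [Submodule.span_le]; intro z hz
    simpa using step1 z hz y hy
  simpa using this hx



set_option linter.unusedSectionVars false

variable {n : Type*} [Fintype n] [DecidableEq n]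

/-- coordinatewise cast `ℤ^n → ℚ^n` as a `ℤ`-linear map. -/
def cmap : (n → ℤ) →ₗ[ℤ] (n → ℚ) where
  toFun x i := (x i : ℚ)
  map_add' x y := by ext i; simp
  map_smul' z x := by ext i; simp

lemma cmap_apply (x : n → ℤ) (i : n) : (cmap x) i = (x i : ℚ) := rfl

lemma cmap_injective : Function.Injective (cmap (n := n)) := by
  intro x y h
  ext i
  have := congrFun h i
  rw [cmap_apply, cmap_apply] at this
  exact_mod_cast this

/-- the bilinear pairing over ℚ of casted vectors equals the cast of the ℤ pairing. -/
lemma bilin_cast (N : Matrix n n ℤ) (x y : n → ℤ) :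
    Matrix.toBilin' (N.map (Int.cast : ℤ → ℚ)) (cmap x) (cmap y)
      = ((∑ i, ∑ j, x i * N i j * y j : ℤ) : ℚ) := by
  rw [Matrix.toBilin'_apply]
  push_cast
  rfl

lemma entry_PNP (P N : Matrix n n ℤ) (i j : n) :
    (P * N * Pᵀ) i j = ∑ k, ∑ l, P i k * N k l * P j l := by
  simp only [Matrix.mul_apply, Matrix.transpose_apply, Finset.sum_mul]
  rw [Finset.sum_comm]

lemma extract (N : Matrix n n ℤ) (h : NullCobordant N) :
    ∃ r : ℕ, Fintype.card n = 2 * r ∧ ∃ Λ : Submodule ℚ (n → ℚ),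
      finrank ℚ Λ = r ∧ ∀ x ∈ Λ, ∀ y ∈ Λ,
        Matrix.toBilin' (N.map (Int.cast : ℤ → ℚ)) x y = 0 := by
  obtain ⟨r, e, P, hP, h0⟩ := h
  refine ⟨r, by simp [Fintype.card_congr e, two_mul], ?_⟩
  set v : Fin r → (n → ℚ) := fun i => cmap (P (e.symm (Sum.inl i))) with hv
  refine ⟨Submodule.span ℚ (Set.range v), ?_, ?_⟩
  · -- linear independence of the rows
    have hPq : IsUnit (P.map (Int.cast : ℤ → ℚ)) := by
      rw [Matrix.isUnit_iff_isUnit_det]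
      have : (P.map (Int.cast : ℤ → ℚ)).det = ((Int.castRingHom ℚ).mapMatrix P).det := rfl
      rw [this, ← RingHom.map_det]
      exact hP.map (Int.castRingHom ℚ)
    have hrows : LinearIndependent ℚ (fun i => (P.map (Int.cast : ℤ → ℚ)) i) :=
      Matrix.linearIndependent_rows_iff_isUnit.2 hPq
    have hveq : v = (fun i => (P.map (Int.cast : ℤ → ℚ)) i) ∘
        (fun i : Fin r => e.symm (Sum.inl i)) := by
      funext i; ext j; rfl
    have hlin : LinearIndependent ℚ v := by
      rw [hveq]
      exact hrows.comp _ (fun i j hij => by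
        simpa using e.symm.injective hij)
    rw [finrank_span_eq_card hlin, Fintype.card_fin]
  · apply span_isotropic
    rintro x ⟨i, rfl⟩ y ⟨j, rfl⟩
    rw [hv, bilin_cast]
    rw [← entry_PNP]
    exact_mod_cast h0 i j



set_option linter.unusedSectionVars false
set_option maxHeartbeats 1000000

open Matrix Module Submodule LinearMap

/-- From a Lagrangian-like ℚ-subspace, build a NullCobordant certificate over ℤ. -/
lemma reconstruct {a r : ℕ} (A : Matrix (Fin a) (Fin a) ℤ) (h2 : a = r + r)
    (Λ : Submodule ℚ (Fin a → ℚ)) (hr : finrank ℚ Λ = r)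
    (hiso : ∀ x ∈ Λ, ∀ y ∈ Λ,
      Matrix.toBilin' (A.map (Int.cast : ℤ → ℚ)) x y = 0) :
    NullCobordant A := by
  classical
  -- the integral points of Λ
  set K : Submodule ℤ (Fin a → ℤ) :=
    (Λ.restrictScalars ℤ).comap (cmap (n := Fin a)) with hK
  have hmemK : ∀ x : Fin a → ℤ, x ∈ K ↔ cmap x ∈ Λ := fun x => Iff.rfl
  -- K is isotropic over ℤ
  have hKiso : ∀ x ∈ K, ∀ y ∈ K, (∑ i, ∑ j, x i * A i j * y j : ℤ) = 0 := by
    intro x hx y hy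
    have := hiso _ ((hmemK x).1 hx) _ ((hmemK y).1 hy)
    rw [bilin_cast] at this
    exact_mod_cast this
  -- basis of K
  let ι := Module.Free.ChooseBasisIndex ℤ K
  let bK : Basis ι ℤ K := Module.Free.chooseBasis ℤ K
  -- the casted basis vectors
  let f : ι → (Fin a → ℚ) := fun i => cmap ((bK i : Fin a → ℤ))
  have hfΛ : ∀ i, f i ∈ Λ := fun i => (hmemK _).1 (bK i).2
  -- f is ℤ-linearly independent, hence ℚ-linearly independent
  have hflin : LinearIndependent ℚ f := by
    rw [← LinearIndependent.iff_fractionRing ℤ ℚ]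
    have : f = (cmap ∘ₗ K.subtype) ∘ bK := rfl
    rw [this]
    apply bK.linearIndependent.map' (cmap ∘ₗ K.subtype)
    rw [LinearMap.ker_eq_bot]
    exact cmap_injective.comp K.injective_subtype
  -- f spans Λ over ℚ
  have hfspan : Submodule.span ℚ (Set.range f) = Λ := by
    apply le_antisymm
    · rw [Submodule.span_le]
      rintro x ⟨i, rfl⟩; exact hfΛ i
    · intro q hq
      -- clear denominators
      set d : ℕ := ∏ i, (q i).den with hd
      have hdpos : 0 < d := Finset.prod_pos (fun i _ => (q i).pos)
      have hint : ∀ i : Fin a, ∃ z : ℤ, (z : ℚ) = (d : ℚ) * q i := by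
        intro i
        obtain ⟨c, hc⟩ := Finset.dvd_prod_of_mem (fun i => (q i).den) (Finset.mem_univ i)
        refine ⟨(c : ℤ) * (q i).num, ?_⟩
        have hm : (q i) * ((q i).den : ℚ) = ((q i).num : ℚ) := Rat.mul_den_eq_num _
        have hdc : ((d : ℕ) : ℚ) = ((q i).den : ℚ) * (c : ℚ) := by exact_mod_cast hc
        push_cast
        rw [hdc, ← hm]
        ring
      choose y hy using hint
      have hyK : y ∈ K := by
        rw [hmemK]
        have : cmap y = (d : ℚ) • q := by
          ext i; rw [cmap_apply, hy i]; simp [Pi.smul_apply, smul_eq_mul]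
        rw [this]
        exact Λ.smul_mem _ hq
      have hdQ : ((d : ℚ)) ≠ 0 := by exact_mod_cast hdpos.ne'
      have hq' : q = ((d : ℚ))⁻¹ • cmap y := by
        ext i
        rw [Pi.smul_apply, cmap_apply, hy i, smul_eq_mul]
        field_simp
      rw [hq']
      apply Submodule.smul_mem
      -- cmap y ∈ span of range f
      set w : ι → ℤ := fun i => bK.repr ⟨y, hyK⟩ i with hw
      have hrep : (⟨y, hyK⟩ : K) = ∑ i, w i • bK i := (bK.sum_repr _).symm
      have hcy : cmap y = ∑ i, ((w i : ℤ) : ℚ) • f i := by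
        have h1 : cmap y = cmap ((∑ i, w i • bK i : K) : Fin a → ℤ) :=
          congrArg (fun v : K => cmap (v : Fin a → ℤ)) hrep
        rw [h1,
          show ((∑ i, w i • bK i : K) : Fin a → ℤ) = ∑ i, w i • ((bK i : Fin a → ℤ)) by simp,
          map_sum]
        refine Finset.sum_congr rfl fun i _ => ?_
        rw [LinearMap.map_smul]
        ext j
        simp only [Pi.smul_apply, cmap_apply, f, zsmul_eq_mul, smul_eq_mul]
        try push_cast
        try ring
      rw [hcy]
      exact Submodule.sum_mem _ (fun i _ =>
        Submodule.smul_mem _ _ (Submodule.subset_span ⟨i, rfl⟩))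
  -- card ι = r
  have hcardι : Fintype.card ι = r := by
    have := finrank_span_eq_card hflin
    rw [hfspan, hr] at this
    omega
  -- quotient is torsion-free, hence free
  have hsat : ∀ (z : ℤ) (x : Fin a → ℤ), z ≠ 0 → z • x ∈ K → x ∈ K := by
    intro z x hz hzx
    rw [hmemK] at hzx ⊢
    rw [LinearMap.map_smul] at hzx
    have h1 : ((z : ℚ)) • cmap x ∈ Λ := by
      convert hzx using 1
      ext i; simp [cmap_apply, zsmul_eq_mul, Pi.smul_apply]
    have h2 := Λ.smul_mem ((z : ℚ))⁻¹ h1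
    rwa [smul_smul, inv_mul_cancel₀ (by exact_mod_cast hz), one_smul] at h2
  haveI : NoZeroSMulDivisors ℤ ((Fin a → ℤ) ⧸ K) := by
    constructor
    intro z x hzx
    by_cases hz : z = 0
    · exact Or.inl hz
    · right
      obtain ⟨y, rfl⟩ := K.mkQ_surjective x
      have h1 : K.mkQ (z • y) = 0 := by rw [LinearMap.map_smul]; exact hzx
      rw [Submodule.mkQ_apply, Submodule.Quotient.mk_eq_zero] at h1
      have := hsat z y hz h1
      rwa [Submodule.mkQ_apply, Submodule.Quotient.mk_eq_zero]
  -- splitting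
  obtain ⟨s, hs⟩ := Module.projective_lifting_property K.mkQ
    (LinearMap.id : ((Fin a → ℤ) ⧸ K) →ₗ[ℤ] _) K.mkQ_surjective
  have hmks : ∀ q, K.mkQ (s q) = q := fun q => congrFun (congrArg DFunLike.coe hs) q
  let g : (K × ((Fin a → ℤ) ⧸ K)) →ₗ[ℤ] (Fin a → ℤ) := K.subtype.coprod s
  have hgapp : ∀ p : K × ((Fin a → ℤ) ⧸ K), g p = (p.1 : Fin a → ℤ) + s p.2 := by
    intro p; rfl
  have hgbij : Function.Bijective g := by
    constructor
    · rintro ⟨k, q⟩ ⟨k', q'⟩ hkq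
      rw [hgapp, hgapp] at hkq
      have hqq : q = q' := by
        have h3 := congrArg K.mkQ hkq
        simp only [map_add, hmks] at h3
        rwa [show K.mkQ (k : Fin a → ℤ) = 0 from (Submodule.Quotient.mk_eq_zero _).2 k.2,
            show K.mkQ (k' : Fin a → ℤ) = 0 from (Submodule.Quotient.mk_eq_zero _).2 k'.2,
            zero_add, zero_add] at h3
      have hkk : (k : Fin a → ℤ) = (k' : Fin a → ℤ) := by
        rw [hqq] at hkq
        exact add_right_cancel hkq
      exact Prod.ext (Subtype.ext hkk) hqq
    · intro x
      have hx : x - s (K.mkQ x) ∈ K := by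
        rw [← Submodule.Quotient.mk_eq_zero, ← Submodule.mkQ_apply, map_sub, hmks, sub_self]
      refine ⟨⟨⟨x - s (K.mkQ x), hx⟩, K.mkQ x⟩, ?_⟩
      rw [hgapp]
      simp
  let ge : (K × ((Fin a → ℤ) ⧸ K)) ≃ₗ[ℤ] (Fin a → ℤ) := LinearEquiv.ofBijective g hgbij
  -- basis of quotient
  let κ := Module.Free.ChooseBasisIndex ℤ ((Fin a → ℤ) ⧸ K)
  let bQ : Basis κ ℤ ((Fin a → ℤ) ⧸ K) := Module.Free.chooseBasis ℤ _
  have hcardκ : Fintype.card κ = r := by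
    have e1 : finrank ℤ (K × ((Fin a → ℤ) ⧸ K)) = finrank ℤ (Fin a → ℤ) :=
      ge.finrank_eq
    rw [Module.finrank_prod, Module.finrank_fintype_fun_eq_card, Fintype.card_fin] at e1
    have e2 : finrank ℤ K = Fintype.card ι := Module.finrank_eq_card_chooseBasisIndex ℤ K
    have e3 : finrank ℤ ((Fin a → ℤ) ⧸ K) = Fintype.card κ :=
      Module.finrank_eq_card_chooseBasisIndex ℤ _
    omega
  -- assemble the basis
  let eι : ι ≃ Fin r := Fintype.equivFinOfCardEq hcardι
  let eκ : κ ≃ Fin r := Fintype.equivFinOfCardEq hcardκ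
  let bb : Basis (Fin r ⊕ Fin r) ℤ (Fin a → ℤ) :=
    ((bK.prod bQ).map ge).reindex (Equiv.sumCongr eι eκ)
  have hbbK : ∀ i : Fin r, bb (Sum.inl i) ∈ K := by
    intro i
    have h1 : bb (Sum.inl i) = ge ((bK.prod bQ) (Sum.inl (eι.symm i))) := by
      simp [bb, Basis.reindex_apply, Basis.map_apply]
    have h2 : (bK.prod bQ) (Sum.inl (eι.symm i)) = ((bK (eι.symm i) : K), (0 : _)) :=
      Prod.ext (Basis.prod_apply_inl_fst _ _ _) (Basis.prod_apply_inl_snd _ _ _)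
    rw [h1, h2]
    show g (_, _) ∈ K
    rw [hgapp]
    simp only [map_zero, add_zero]
    exact (bK (eι.symm i)).2
  let e : Fin a ≃ Fin r ⊕ Fin r := (finCongr h2).trans finSumFinEquiv.symm
  let P : Matrix (Fin a) (Fin a) ℤ := Matrix.of fun i j => bb (e i) j
  have hProw : ∀ i : Fin r ⊕ Fin r, P (e.symm i) = bb i := by
    intro i; funext k
    show bb (e (e.symm i)) k = bb i k
    rw [Equiv.apply_symm_apply]
  refine ⟨r, e, P, ?_, ?_⟩
  · -- determinant is a unit
    let std : Basis (Fin a) ℤ (Fin a → ℤ) := Pi.basisFun ℤ (Fin a)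
    have hPT : P = (std.toMatrix ⇑(bb.reindex e.symm))ᵀ := by
      ext i j
      rw [Matrix.transpose_apply, Basis.toMatrix_apply, Basis.reindex_apply]
      simp [std, Pi.basisFun_repr, P]
    haveI := Basis.invertibleToMatrix std (bb.reindex e.symm)
    rw [hPT, Matrix.det_transpose]
    exact Matrix.isUnit_det_of_invertible _
  · intro i j
    rw [entry_PNP]
    refine hKiso _ ?_ _ ?_
    · rw [hProw (Sum.inl i)]; exact hbbK i
    · rw [hProw (Sum.inl j)]; exact hbbK j



set_option linter.unusedSectionVars false
set_option maxHeartbeats 1600000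

open Matrix Module Submodule LinearMap

variable {K' : Type*} [Field K'] {m : Type*} [Fintype m] [DecidableEq m]

lemma toBilin'_transpose_apply (M : Matrix m m K') (x y : m → K') :
    Matrix.toBilin' Mᵀ x y = Matrix.toBilin' M y x := by
  rw [Matrix.toBilin'_apply, Matrix.toBilin'_apply, Finset.sum_comm]
  refine Finset.sum_congr rfl fun i _ => Finset.sum_congr rfl fun j _ => ?_
  rw [Matrix.transpose_apply]; ring

lemma toBilin'_smul_apply (c : K') (M : Matrix m m K') (x y : m → K') :
    Matrix.toBilin' (c • M) x y = c * Matrix.toBilin' M x y := by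
  rw [_root_.map_smul]
  rfl

lemma toBilin'_add_apply (M N : Matrix m m K') (x y : m → K') :
    Matrix.toBilin' (M + N) x y = Matrix.toBilin' M x y + Matrix.toBilin' N x y := by
  rw [map_add]
  rfl

lemma elim_bilin {a b : ℕ} (X : Matrix (Fin a) (Fin a) K') (Y : Matrix (Fin b) (Fin b) K')
    (x x' : Fin a → K') (y y' : Fin b → K') :
    Matrix.toBilin' (Matrix.fromBlocks X 0 0 (-Y)) (Sum.elim x y) (Sum.elim x' y')
      = Matrix.toBilin' X x x' - Matrix.toBilin' Y y y' := by
  rw [Matrix.toBilin'_apply', Matrix.toBilin'_apply', Matrix.toBilin'_apply',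
    Matrix.fromBlocks_mulVec]
  rw [Matrix.zero_mulVec, Matrix.zero_mulVec, add_zero, zero_add, Matrix.neg_mulVec,
    sumElim_dotProduct_sumElim, dotProduct_neg, Sum.elim_comp_inl,
    Sum.elim_comp_inr]
  ring


end LevineAux

open Matrix Module Submodule LinearMap LevineAux

set_option maxHeartbeats 1600000 in
theorem stmt17 {a b : ℕ} (ε : ℤ) (hε : ε = 1 ∨ ε = -1)
    (A : Matrix (Fin a) (Fin a) ℤ) (B : Matrix (Fin b) (Fin b) ℤ)
    (hA : IsUnit (A + ε • Aᵀ).det) (hB : IsUnit (B + ε • Bᵀ).det)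
    (hcob : NullCobordant (Matrix.fromBlocks A 0 0 (-B)))
    (hBnull : NullCobordant B) :
    NullCobordant A := by
  classical
  obtain ⟨r₁, hc1, Λ, hΛr, hΛiso⟩ := LevineAux.extract _ hcob
  obtain ⟨s, hc2, M, hMr, hMiso⟩ := LevineAux.extract _ hBnull
  have hab : a + b = 2 * r₁ := by simpa using hc1
  have hb2 : b = 2 * s := by simpa using hc2
  set εq : ℚ := (ε : ℚ) with hεqdef
  have hεq2 : εq * εq = 1 := by rcases hε with h | h <;> simp [hεqdef, h]
  set Aq : Matrix (Fin a) (Fin a) ℚ := A.map (Int.cast : ℤ → ℚ) with hAqdef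
  set Bq : Matrix (Fin b) (Fin b) ℚ := B.map (Int.cast : ℤ → ℚ) with hBqdef
  set NQ : Matrix (Fin a ⊕ Fin b) (Fin a ⊕ Fin b) ℚ :=
    (Matrix.fromBlocks A 0 0 (-B)).map (Int.cast : ℤ → ℚ) with hNQdef
  have hNQ : NQ = Matrix.fromBlocks Aq 0 0 (-Bq) := by
    ext i j
    cases i <;> cases j <;> simp [hNQdef, hAqdef, hBqdef, Matrix.map_apply]
  set ΦA : Matrix (Fin a) (Fin a) ℚ := Aq + εq • Aqᵀ with hΦAdef
  set ΦB : Matrix (Fin b) (Fin b) ℚ := Bq + εq • Bqᵀ with hΦBdef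
  set ΦN : Matrix (Fin a ⊕ Fin b) (Fin a ⊕ Fin b) ℚ := NQ + εq • NQᵀ with hΦNdef
  -- symmetrized casts
  have hcastA : ΦA = (A + ε • Aᵀ).map (Int.cast : ℤ → ℚ) := by
    ext i j
    simp only [hΦAdef, hAqdef, hεqdef, Matrix.add_apply, Matrix.smul_apply,
      Matrix.transpose_apply, Matrix.map_apply, smul_eq_mul]
    push_cast
    ring
  have hcastB : ΦB = (B + ε • Bᵀ).map (Int.cast : ℤ → ℚ) := by
    ext i j
    simp only [hΦBdef, hBqdef, hεqdef, Matrix.add_apply, Matrix.smul_apply,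
      Matrix.transpose_apply, Matrix.map_apply, smul_eq_mul]
    push_cast
    ring
  have hdA : ΦA.det ≠ 0 := by
    rw [hcastA]
    rw [show (A + ε • Aᵀ).map (Int.cast : ℤ → ℚ) = (Int.castRingHom ℚ).mapMatrix (A + ε • Aᵀ)
      from rfl, ← RingHom.map_det]
    rcases Int.isUnit_iff.1 hA with h | h <;> rw [h] <;> norm_num
  have hdB : ΦB.det ≠ 0 := by
    rw [hcastB]
    rw [show (B + ε • Bᵀ).map (Int.cast : ℤ → ℚ) = (Int.castRingHom ℚ).mapMatrix (B + ε • Bᵀ)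
      from rfl, ← RingHom.map_det]
    rcases Int.isUnit_iff.1 hB with h | h <;> rw [h] <;> norm_num
  have hΦNblocks : ΦN = Matrix.fromBlocks ΦA 0 0 (-ΦB) := by
    ext i j
    cases i <;> cases j <;>
      simp [hΦNdef, hNQ, hΦAdef, hΦBdef, Matrix.add_apply, Matrix.smul_apply,
        Matrix.transpose_apply, Matrix.neg_apply, smul_eq_mul] <;> ring
  have hdN : ΦN.det ≠ 0 := by
    rw [hΦNblocks, Matrix.det_fromBlocks_zero₂₁, Matrix.det_neg]
    simp only [ne_eq, mul_eq_zero]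
    push_neg
    refine ⟨hdA, ?_, hdB⟩
    simp
  -- the bilinear forms
  set ψ := Matrix.toBilin' NQ with hψdef
  set ψA := Matrix.toBilin' Aq with hψAdef
  set ψB := Matrix.toBilin' Bq with hψBdef
  set φ := Matrix.toBilin' ΦN with hφdef
  set φA := Matrix.toBilin' ΦA with hφAdef
  set φB := Matrix.toBilin' ΦB with hφBdef
  have hnN : φ.Nondegenerate :=
    Matrix.nondegenerate_toBilin'_iff.2 (Matrix.nondegenerate_of_det_ne_zero hdN)
  have hnA : φA.Nondegenerate :=
    Matrix.nondegenerate_toBilin'_iff.2 (Matrix.nondegenerate_of_det_ne_zero hdA)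
  have hnB : φB.Nondegenerate :=
    Matrix.nondegenerate_toBilin'_iff.2 (Matrix.nondegenerate_of_det_ne_zero hdB)
  -- ε-symmetry
  have hTA : ΦAᵀ = εq • ΦA := by
    rw [hΦAdef, Matrix.transpose_add, Matrix.transpose_smul, Matrix.transpose_transpose,
      smul_add, smul_smul, hεq2, one_smul]
    abel
  have hTB : ΦBᵀ = εq • ΦB := by
    rw [hΦBdef, Matrix.transpose_add, Matrix.transpose_smul, Matrix.transpose_transpose,
      smul_add, smul_smul, hεq2, one_smul]
    abel
  have hTN : ΦNᵀ = εq • ΦN := by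
    rw [hΦNdef, Matrix.transpose_add, Matrix.transpose_smul, Matrix.transpose_transpose,
      smul_add, smul_smul, hεq2, one_smul]
    abel
  have heA : ∀ x y, φA y x = εq * φA x y := fun x y => by
    rw [hφAdef, ← toBilin'_transpose_apply, hTA, toBilin'_smul_apply]
  have heB : ∀ x y, φB y x = εq * φB x y := fun x y => by
    rw [hφBdef, ← toBilin'_transpose_apply, hTB, toBilin'_smul_apply]
  have heN : ∀ x y, φ y x = εq * φ x y := fun x y => by
    rw [hφdef, ← toBilin'_transpose_apply, hTN, toBilin'_smul_apply]
  have hrA : φA.IsRefl := fun x y h => by rw [heA x y, h, mul_zero]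
  have hrB : φB.IsRefl := fun x y h => by rw [heB x y, h, mul_zero]
  have hrN : φ.IsRefl := fun x y h => by rw [heN x y, h, mul_zero]
  -- relation between φ and ψ
  have hφψ : ∀ x y, φ x y = ψ x y + εq * ψ y x := fun x y => by
    rw [hφdef, hΦNdef, toBilin'_add_apply, toBilin'_smul_apply, toBilin'_transpose_apply]
  have hφψA : ∀ x y, φA x y = ψA x y + εq * ψA y x := fun x y => by
    rw [hφAdef, hΦAdef, toBilin'_add_apply, toBilin'_smul_apply, toBilin'_transpose_apply]
  have hφψB : ∀ x y, φB x y = ψB x y + εq * ψB y x := fun x y => by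
    rw [hφBdef, hΦBdef, toBilin'_add_apply, toBilin'_smul_apply, toBilin'_transpose_apply]
  -- block splitting
  have hsplitψ : ∀ (x x' : Fin a → ℚ) (y y' : Fin b → ℚ),
      ψ (Sum.elim x y) (Sum.elim x' y') = ψA x x' - ψB y y' := by
    intro x x' y y'
    rw [hψdef, hNQ, hψAdef, hψBdef]
    exact elim_bilin Aq Bq x x' y y'
  have hsplitφ : ∀ (x x' : Fin a → ℚ) (y y' : Fin b → ℚ),
      φ (Sum.elim x y) (Sum.elim x' y') = φA x x' - φB y y' := by
    intro x x' y y'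
    rw [hφdef, hΦNblocks, hφAdef, hφBdef]
    exact elim_bilin ΦA ΦB x x' y y'
  -- projections
  set π₁ : ((Fin a ⊕ Fin b) → ℚ) →ₗ[ℚ] (Fin a → ℚ) :=
    LinearMap.funLeft ℚ ℚ Sum.inl with hπ₁def
  set π₂ : ((Fin a ⊕ Fin b) → ℚ) →ₗ[ℚ] (Fin b → ℚ) :=
    LinearMap.funLeft ℚ ℚ Sum.inr with hπ₂def
  have helim : ∀ f : (Fin a ⊕ Fin b) → ℚ, Sum.elim (π₁ f) (π₂ f) = f := by
    intro f; funext i; cases i <;> rfl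
  have hπ₁elim : ∀ (x : Fin a → ℚ) (y : Fin b → ℚ), π₁ (Sum.elim x y) = x := fun x y => rfl
  have hπ₂elim : ∀ (x : Fin a → ℚ) (y : Fin b → ℚ), π₂ (Sum.elim x y) = y := fun x y => rfl
  -- finranks
  have hfrV : finrank ℚ ((Fin a ⊕ Fin b) → ℚ) = a + b := by
    rw [Module.finrank_fintype_fun_eq_card]; simp
  have hfrA : finrank ℚ (Fin a → ℚ) = a := by
    rw [Module.finrank_fintype_fun_eq_card]; simp
  have hfrB : finrank ℚ (Fin b → ℚ) = b := by
    rw [Module.finrank_fintype_fun_eq_card]; simp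
  -- upgraded isotropy
  have hΛφ : ∀ x ∈ Λ, ∀ y ∈ Λ, φ x y = 0 := by
    intro x hx y hy
    rw [hφψ, hΛiso x hx y hy, hΛiso y hy x hx, mul_zero, add_zero]
  have hMφ : ∀ x ∈ M, ∀ y ∈ M, φB x y = 0 := by
    intro x hx y hy
    rw [hφψB, hMiso x hx y hy, hMiso y hy x hx, mul_zero, add_zero]
  -- Lagrangian properties
  have hΛlag : φ.orthogonal Λ = Λ := by
    apply lagrangian_of_isotropic φ hnN hrN Λ hΛφ
    rw [hΛr, hfrV]; omega
  have hMlag : φB.orthogonal M = M := by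
    apply lagrangian_of_isotropic φB hnB hrB M hMφ
    rw [hMr, hfrB]; omega
  -- the key subspaces
  set Y : Submodule ℚ ((Fin a ⊕ Fin b) → ℚ) := M.comap π₂ with hYdef
  set Z : Submodule ℚ ((Fin a ⊕ Fin b) → ℚ) := (LinearMap.ker π₁) ⊓ Y with hZdef
  have hmemY : ∀ f, f ∈ Y ↔ π₂ f ∈ M := fun f => Iff.rfl
  have hmemZ : ∀ f, f ∈ Z ↔ π₁ f = 0 ∧ π₂ f ∈ M := by
    intro f
    simp [hZdef, Submodule.mem_inf, LinearMap.mem_ker, hmemY]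
  have hYorth : φ.orthogonal Y = Z := by
    apply le_antisymm
    · intro w hw
      rw [LinearMap.BilinForm.mem_orthogonal_iff] at hw
      rw [hmemZ]
      constructor
      · apply hnA.1
        intro x
        apply hrA
        have h1 : Sum.elim x 0 ∈ Y := by rw [hmemY, hπ₂elim]; exact M.zero_mem
        have h2 := hw _ h1
        rw [← helim w, hsplitφ] at h2
        have h3 : φB (0 : Fin b → ℚ) (π₂ w) = 0 := by simp
        rw [h3, sub_zero] at h2
        exact h2
      · rw [← hMlag]
        intro m hm
        have h1 : Sum.elim (0 : Fin a → ℚ) m ∈ Y := by rw [hmemY, hπ₂elim]; exact hm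
        have h2 := hw _ h1
        rw [← helim w, hsplitφ] at h2
        have h3 : φA (0 : Fin a → ℚ) (π₁ w) = 0 := by simp
        rw [h3, zero_sub, neg_eq_zero] at h2
        exact h2
    · intro z hz
      rw [hmemZ] at hz
      intro n hn
      rw [← helim n, ← helim z, hsplitφ, hz.1]
      have h1 : φA (π₁ n) (0 : Fin a → ℚ) = 0 := by simp
      have h2 : φB (π₂ n) (π₂ z) = 0 := hMφ _ ((hmemY n).1 hn) _ hz.2
      rw [h1, h2, sub_zero]
  have hZorth : φ.orthogonal Z = Y := by
    rw [← hYorth, LinearMap.BilinForm.orthogonal_orthogonal hnN hrN]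
  have horthinf : φ.orthogonal (Λ ⊓ Y) = Λ ⊔ Z := by
    conv_lhs => rw [← hΛlag, ← hZorth]
    rw [← orth_sup, LinearMap.BilinForm.orthogonal_orthogonal hnN hrN]
  -- the composed Lagrangian
  set K : Submodule ℚ (Fin a → ℚ) := (Λ ⊓ Y).map π₁ with hKdef
  have hKiso : ∀ x ∈ K, ∀ y ∈ K, ψA x y = 0 := by
    rintro x ⟨u, hu, rfl⟩ y ⟨u', hu', rfl⟩
    have h1 : ψ u u' = 0 := hΛiso u hu.1 u' hu'.1
    rw [← helim u, ← helim u', hsplitψ] at h1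
    have h2 : ψB (π₂ u) (π₂ u') = 0 := hMiso _ ((hmemY u).1 hu.2) _ ((hmemY u').1 hu'.2)
    rw [h2, sub_zero] at h1
    exact h1
  have hKφiso : ∀ x ∈ K, ∀ y ∈ K, φA x y = 0 := by
    intro x hx y hy
    rw [hφψA, hKiso x hx y hy, hKiso y hy x hx, mul_zero, add_zero]
  have hKperp : φA.orthogonal K ≤ K := by
    intro x hx
    rw [LinearMap.BilinForm.mem_orthogonal_iff] at hx
    have hxmem : Sum.elim x 0 ∈ φ.orthogonal (Λ ⊓ Y) := by
      intro u hu
      rw [← helim u, hsplitφ]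
      have h1 : φA (π₁ u) x = 0 := hx _ ⟨u, hu, rfl⟩
      have h2 : φB (π₂ u) (0 : Fin b → ℚ) = 0 := by simp
      rw [h1, h2, sub_zero]
    rw [horthinf] at hxmem
    rcases Submodule.mem_sup.1 hxmem with ⟨u, hu, z, hz, huz⟩
    rw [hmemZ] at hz
    have hπ₂uz : π₂ u + π₂ z = 0 := by
      have := congrArg π₂ huz
      rw [map_add, hπ₂elim] at this
      exact this
    have huY : u ∈ Y := by
      rw [hmemY, show π₂ u = -π₂ z from by linear_combination hπ₂uz]
      exact M.neg_mem hz.2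
    have hπ₁u : π₁ u = x := by
      have := congrArg π₁ huz
      rw [map_add, hπ₁elim, hz.1, add_zero] at this
      exact this
    exact ⟨u, ⟨hu, huY⟩, hπ₁u⟩
  have hKle : K ≤ φA.orthogonal K := fun x hx n hn => hKφiso n hn x hx
  have hKlag : φA.orthogonal K = K := le_antisymm hKperp hKle
  have hfrK : a = finrank ℚ K + finrank ℚ K := by
    have h1 := LinearMap.BilinForm.finrank_orthogonal hnA K
    rw [hKlag, hfrA] at h1
    have h2 := Submodule.finrank_le K
    rw [hfrA] at h2
    omega
  exact LevineAux.reconstruct A hfrK K rfl hKiso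
end
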